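/- arXiv:2407.14476 — 6 statements merged into one kernel-verified Lean document; each statement's English description precedes it below -/
import Mathlib

section
/- For every complex number $a$ in the closed upper half unit disk $\overline{\mathbb{D}^+} = \{z : |z| \le 1, \operatorname{Im} z \ge 0\}$, one has $2(\sqrt{2}-1) \le |(a+1)^2 + i(a-1)^2| \le 8$. -/
/-!
Since $\sqrt2^2 = 2$, the polynomial factors as
$(a+1)^2 + i(a-1)^2 = (1+i)\,(a - (1+\sqrt2)i)\,(a + (\sqrt2-1)i)$.
On the closed upper half disk the middle factor has modulus at least $(1+\sqrt2) - 1 = \sqrt2$,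
and the last one at least its imaginary part $\operatorname{Im} a + \sqrt2 - 1 \ge \sqrt2 - 1$,
which gives the lower bound $\sqrt2 \cdot \sqrt2 \cdot (\sqrt2-1)$. The upper bound is the triangle
inequality followed by the parallelogram law: $|a+1|^2 + |a-1|^2 = 2|a|^2 + 2 \le 4$.
-/

open Complex

namespace Complex

lemma sq_add_one_add_I_mul_sq_sub_one_eq (a : ℂ) :
    (a + 1) ^ 2 + I * (a - 1) ^ 2 =
      (1 + I) * (a - ((1 + √2 : ℝ) : ℂ) * I) * (a + ((√2 - 1 : ℝ) : ℂ) * I) := by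
  have hsqrt : ((√2 : ℝ) : ℂ) ^ 2 = 2 := by
    exact_mod_cast Real.sq_sqrt (zero_le_two : (0 : ℝ) ≤ 2)
  push_cast
  linear_combination (2 * a + 1 + I) * I_sq + (1 + I) * I ^ 2 * hsqrt

lemma norm_one_add_I : ‖(1 : ℂ) + I‖ = √2 := by
  simpa [one_add_one_eq_two] using norm_add_mul_I 1 1

lemma norm_sq_add_one_add_I_mul_sq_sub_one_le (a : ℂ) :
    ‖(a + 1) ^ 2 + I * (a - 1) ^ 2‖ ≤ 2 * ‖a‖ ^ 2 + 2 := by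
  have parallelogram := parallelogram_law_with_norm ℝ a 1
  calc ‖(a + 1) ^ 2 + I * (a - 1) ^ 2‖
      ≤ ‖(a + 1) ^ 2‖ + ‖I * (a - 1) ^ 2‖ := norm_add_le _ _
    _ = ‖a + 1‖ ^ 2 + ‖a - 1‖ ^ 2 := by simp only [norm_mul, norm_pow, norm_I, one_mul]
    _ = 2 * ‖a‖ ^ 2 + 2 := by rw [norm_one] at parallelogram; linarith

lemma two_mul_sqrt_two_sub_one_le_norm (a : ℂ) (h1 : ‖a‖ ≤ 1) (h2 : 0 ≤ a.im) :
    2 * (√2 - 1) ≤ ‖(a + 1) ^ 2 + I * (a - 1) ^ 2‖ := by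
  have hsqrt : √2 * √2 = 2 := Real.mul_self_sqrt zero_le_two
  have hsqrt_ge_one : 1 ≤ √2 := Real.one_le_sqrt.mpr one_le_two
  have hmiddle : √2 ≤ ‖a - ((1 + √2 : ℝ) : ℂ) * I‖ := by
    have hnorm : ‖((1 + √2 : ℝ) : ℂ) * I‖ = 1 + √2 := by
      rw [norm_mul, norm_I, mul_one, norm_real, Real.norm_of_nonneg (by positivity)]
    have := norm_sub_norm_le (((1 + √2 : ℝ) : ℂ) * I) a
    rw [hnorm, norm_sub_rev] at this
    linarith
  have hlast : √2 - 1 ≤ ‖a + ((√2 - 1 : ℝ) : ℂ) * I‖ := by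
    have := im_le_norm (a + ((√2 - 1 : ℝ) : ℂ) * I)
    simp only [add_im, mul_I_im, ofReal_re] at this
    linarith
  rw [sq_add_one_add_I_mul_sq_sub_one_eq, norm_mul, norm_mul, norm_one_add_I]
  calc 2 * (√2 - 1) = √2 * √2 * (√2 - 1) := by rw [hsqrt]
    _ ≤ √2 * ‖a - ((1 + √2 : ℝ) : ℂ) * I‖ * ‖a + ((√2 - 1 : ℝ) : ℂ) * I‖ := by
      gcongr

end Complex

theorem stmt_0 (a : ℂ) (h1 : ‖a‖ ≤ 1) (h2 : 0 ≤ a.im) :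
    2 * (Real.sqrt 2 - 1) ≤ ‖(a + 1) ^ 2 + I * (a - 1) ^ 2‖ ∧
    ‖(a + 1) ^ 2 + I * (a - 1) ^ 2‖ ≤ 8 := by
  refine ⟨two_mul_sqrt_two_sub_one_le_norm a h1 h2, ?_⟩
  have ha : ‖a‖ ^ 2 ≤ 1 := pow_le_one₀ (norm_nonneg a) h1
  linarith [norm_sq_add_one_add_I_mul_sq_sub_one_le a]
end

section
/- Let $a, b$ be complex numbers in the closed upper half unit disk. Then $|1 - ba| \ge \frac{1}{\sqrt{2}} \min\{|1-b|, |1+b|\}$. -/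
/-!
Reflecting `a ↦ -conj a`, `b ↦ -conj b` swaps `1 - b` with `conj (1 + b)` and fixes `‖1 - b a‖`, so
we may assume `0 ≤ re b`. Multiplying by `conj b` gives `‖b‖ ‖1 - b a‖ = ‖conj b - ‖b‖² a‖` and
`‖b‖ ‖1 - b‖ = ‖conj b - ‖b‖²‖`. Now `conj b` lies in the lower half-plane and `‖b‖² a` in the region
`{Im ≥ 0, Re ≤ ‖b‖²}`, whose point nearest to `conj b` is `min (re b) ‖b‖²`; comparing distances
to that point and to `‖b‖²` costs at most the factor `√2`.
-/

open Complex ComplexConjugate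

lemma normSq_sub_normSq_le_two_mul_normSq_sub {c z : ℂ} (hc_re : 0 ≤ c.re) (hc_im : c.im ≤ 0)
    (hc : normSq c ≤ 1) (hz_re : z.re ≤ normSq c) (hz_im : 0 ≤ z.im) :
    normSq (c - normSq c) ≤ 2 * normSq (c - z) := by
  obtain ⟨u, v⟩ := c
  obtain ⟨x, y⟩ := z
  simp only [normSq_apply, sub_re, sub_im, ofReal_re, ofReal_im] at *
  rcases le_total u (u * u + v * v) with hu | hu
  · -- `v² - (ρ - u)² = ρ (1 - ρ) + 2 u (ρ - u)` with `ρ = u² + v²`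
    nlinarith [mul_nonneg hc_re (sub_nonneg.2 hu), mul_nonneg hz_im (neg_nonneg.2 hc_im)]
  · nlinarith [mul_nonneg (sub_nonneg.2 hu) (sub_nonneg.2 hz_re),
      mul_nonneg hz_im (neg_nonneg.2 hc_im)]

lemma normSq_one_sub_le_two_mul_normSq_one_sub_mul {a b : ℂ} (ha : ‖a‖ ≤ 1) (ha_im : 0 ≤ a.im)
    (hb : ‖b‖ ≤ 1) (hb_re : 0 ≤ b.re) (hb_im : 0 ≤ b.im) :
    normSq (1 - b) ≤ 2 * normSq (1 - b * a) := by
  rcases eq_or_ne b 0 with rfl | hb0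
  · norm_num
  have key := normSq_sub_normSq_le_two_mul_normSq_sub (c := conj b) (z := normSq b * a)
    (by simpa using hb_re) (by simpa using hb_im)
    (by rw [normSq_conj, ← Complex.sq_norm]; nlinarith [norm_nonneg b])
    (by
      rw [normSq_conj, re_ofReal_mul]
      exact mul_le_of_le_one_right (normSq_nonneg b) ((re_le_norm a).trans ha))
    (by rw [im_ofReal_mul]; exact mul_nonneg (normSq_nonneg b) ha_im)
  have h1 : conj b - (normSq (conj b) : ℂ) = conj b * (1 - b) := by
    rw [normSq_conj, ← mul_conj]; ring
  have h2 : conj b - (normSq b : ℂ) * a = conj b * (1 - b * a) := by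
    rw [← mul_conj]; ring
  rw [h1, h2, normSq_mul, normSq_mul, normSq_conj, mul_left_comm] at key
  exact le_of_mul_le_mul_left key (normSq_pos.2 hb0)

lemma norm_one_sub_le_sqrt_two_mul_norm_one_sub_mul {a b : ℂ} (ha : ‖a‖ ≤ 1) (ha_im : 0 ≤ a.im)
    (hb : ‖b‖ ≤ 1) (hb_re : 0 ≤ b.re) (hb_im : 0 ≤ b.im) :
    ‖1 - b‖ ≤ √2 * ‖1 - b * a‖ := by
  rw [norm_def, norm_def, ← Real.sqrt_mul zero_le_two]
  exact Real.sqrt_le_sqrt (normSq_one_sub_le_two_mul_normSq_one_sub_mul ha ha_im hb hb_re hb_im)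

lemma norm_one_add_le_sqrt_two_mul_norm_one_sub_mul {a b : ℂ} (ha : ‖a‖ ≤ 1) (ha_im : 0 ≤ a.im)
    (hb : ‖b‖ ≤ 1) (hb_re : b.re ≤ 0) (hb_im : 0 ≤ b.im) :
    ‖1 + b‖ ≤ √2 * ‖1 - b * a‖ := by
  have h := norm_one_sub_le_sqrt_two_mul_norm_one_sub_mul (a := -conj a) (b := -conj b)
    (by simpa using ha) (by simpa using ha_im) (by simpa using hb) (by simpa using hb_re)
    (by simpa using hb_im)
  rwa [sub_neg_eq_add, neg_mul_neg, ← map_one conj, ← map_add, ← map_mul, ← map_sub,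
    RCLike.norm_conj, RCLike.norm_conj] at h

theorem stmt_4 (a b : ℂ) (ha : ‖a‖ ≤ 1) (ha' : 0 ≤ a.im)
    (hb : ‖b‖ ≤ 1) (hb' : 0 ≤ b.im) :
    (1 / Real.sqrt 2) * min (‖1 - b‖) (‖1 + b‖)
      ≤ ‖1 - b * a‖ := by
  have h : min ‖1 - b‖ ‖1 + b‖ ≤ √2 * ‖1 - b * a‖ := by
    rcases le_total 0 b.re with hb_re | hb_re
    · exact min_le_of_left_le (norm_one_sub_le_sqrt_two_mul_norm_one_sub_mul ha ha' hb hb_re hb')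
    · exact min_le_of_right_le (norm_one_add_le_sqrt_two_mul_norm_one_sub_mul ha ha' hb hb_re hb')
  rwa [one_div_mul_eq_div, div_le_iff₀' (by positivity)]
end

section
/- Let $a, b, c$ be pairwise distinct complex numbers in the closed upper half unit disk and set $k = \frac{c-b}{a-b}$. Then $\left|\frac{1-bc}{1-ba}\right| \le 5(1 + |k|)$, provided $1 - ba \ne 0$. -/
/-! With `k = (c - b) / (a - b)` one has `1 - bc = k (1 - ba) + (1 - k) (1 - b²)`, so it suffices
to bound `|1 - b²| / |1 - ba|` by `2√2`. For `a, b` in the closed upper half disk, `|1 - ba|`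
dominates `1 - |Re b|` (through its real part) and `Im b` (through the imaginary part of
`conj b (1 - ba) = conj b - |b|² a`), hence `√2 |1 - ba| ≥ min (|1 - b|, |1 + b|)`; and
`|1 - b²| = |1 - b| |1 + b| ≤ 2 min (|1 - b|, |1 + b|)`. -/

open Complex ComplexConjugate

theorem div_one_sub_mul_eq {K : Type*} [Field K] {a b : K} (c : K) (hab : a ≠ b)
    (hden : 1 - b * a ≠ 0) :
    (1 - b * c) / (1 - b * a) =
      (c - b) / (a - b) + (1 - (c - b) / (a - b)) * ((1 - b ^ 2) / (1 - b * a)) := by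
  have hab' : a - b ≠ 0 := sub_ne_zero.mpr hab
  field_simp
  ring

section UpperHalfDisk

variable {a b : ℂ}

theorem im_le_norm_one_sub_mul (ha' : 0 ≤ a.im) (hb : ‖b‖ ≤ 1) (hb' : 0 ≤ b.im) :
    b.im ≤ ‖1 - b * a‖ := by
  have him : (conj b * (1 - b * a)).im = -(b.im + normSq b * a.im) := by
    rw [mul_sub, mul_one, ← mul_assoc, mul_comm (conj b), mul_conj]
    simp only [sub_im, conj_im, ofReal_im, ofReal_re, mul_im, zero_mul, add_zero]
    ring
  have hpos : 0 ≤ normSq b * a.im := mul_nonneg (normSq_nonneg b) ha'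
  calc b.im ≤ b.im + normSq b * a.im := le_add_of_nonneg_right hpos
    _ = |(conj b * (1 - b * a)).im| := by
        rw [him, abs_neg, abs_of_nonneg (add_nonneg hb' hpos)]
    _ ≤ ‖conj b * (1 - b * a)‖ := abs_im_le_norm _
    _ = ‖b‖ * ‖1 - b * a‖ := by rw [norm_mul, norm_conj]
    _ ≤ ‖1 - b * a‖ := mul_le_of_le_one_left (norm_nonneg _) hb

theorem one_sub_abs_re_le_norm_one_sub_mul (ha : ‖a‖ ≤ 1) (ha' : 0 ≤ a.im) (hb' : 0 ≤ b.im) :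
    1 - |b.re| ≤ ‖1 - b * a‖ := by
  have hre : |b.re * a.re| ≤ |b.re| := by
    rw [abs_mul]
    exact mul_le_of_le_one_right (abs_nonneg _) ((abs_re_le_norm a).trans ha)
  calc 1 - |b.re| ≤ 1 - b.re * a.re + b.im * a.im := by
        nlinarith [le_abs_self (b.re * a.re), mul_nonneg hb' ha']
    _ = (1 - b * a).re := by simp only [sub_re, one_re, mul_re]; ring
    _ ≤ ‖1 - b * a‖ := re_le_norm _

theorem min_norm_one_sub_norm_one_add_sq (b : ℂ) :
    min ‖1 - b‖ ‖1 + b‖ ^ 2 = (1 - |b.re|) ^ 2 + b.im ^ 2 := by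
  have h₁ : ‖1 - b‖ ^ 2 = (1 - b.re) ^ 2 + b.im ^ 2 := by
    rw [Complex.sq_norm, normSq_apply]; simp only [sub_re, one_re, sub_im, one_im]; ring
  have h₂ : ‖1 + b‖ ^ 2 = (1 + b.re) ^ 2 + b.im ^ 2 := by
    rw [Complex.sq_norm, normSq_apply]; simp only [add_re, one_re, add_im, one_im]; ring
  rcases le_total 0 b.re with h | h
  · have hle : ‖1 - b‖ ≤ ‖1 + b‖ := by
      rw [← pow_le_pow_iff_left₀ (norm_nonneg _) (norm_nonneg _) two_ne_zero, h₁, h₂]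
      nlinarith
    rw [min_eq_left hle, h₁, abs_of_nonneg h]
  · have hle : ‖1 + b‖ ≤ ‖1 - b‖ := by
      rw [← pow_le_pow_iff_left₀ (norm_nonneg _) (norm_nonneg _) two_ne_zero, h₁, h₂]
      nlinarith
    rw [min_eq_right hle, h₂, abs_of_nonpos h, sub_neg_eq_add]

theorem min_norm_one_sub_norm_one_add_le (ha : ‖a‖ ≤ 1) (ha' : 0 ≤ a.im) (hb : ‖b‖ ≤ 1)
    (hb' : 0 ≤ b.im) : min ‖1 - b‖ ‖1 + b‖ ≤ √2 * ‖1 - b * a‖ := by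
  have hre : 0 ≤ 1 - |b.re| := sub_nonneg.mpr ((abs_re_le_norm b).trans hb)
  have him := im_le_norm_one_sub_mul ha' hb hb'
  have hre' := one_sub_abs_re_le_norm_one_sub_mul ha ha' hb'
  rw [← pow_le_pow_iff_left₀ (by positivity) (by positivity) two_ne_zero, mul_pow,
    Real.sq_sqrt zero_le_two, min_norm_one_sub_norm_one_add_sq]
  nlinarith

theorem norm_one_sub_sq_le (ha : ‖a‖ ≤ 1) (ha' : 0 ≤ a.im) (hb : ‖b‖ ≤ 1) (hb' : 0 ≤ b.im) :
    ‖1 - b ^ 2‖ ≤ 2 * √2 * ‖1 - b * a‖ := by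
  have h₁ : ‖1 - b‖ ≤ 2 := (norm_sub_le _ _).trans (by rw [norm_one]; linarith)
  have h₂ : ‖1 + b‖ ≤ 2 := (norm_add_le _ _).trans (by rw [norm_one]; linarith)
  have hprod : ‖1 - b ^ 2‖ ≤ 2 * min ‖1 - b‖ ‖1 + b‖ := by
    rw [show (1 : ℂ) - b ^ 2 = (1 - b) * (1 + b) by ring, norm_mul]
    rcases le_total ‖1 - b‖ ‖1 + b‖ with h | h
    · rw [min_eq_left h]; nlinarith [norm_nonneg (1 - b)]
    · rw [min_eq_right h]; nlinarith [norm_nonneg (1 + b)]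
  calc ‖1 - b ^ 2‖ ≤ 2 * min ‖1 - b‖ ‖1 + b‖ := hprod
    _ ≤ 2 * (√2 * ‖1 - b * a‖) := by gcongr; exact min_norm_one_sub_norm_one_add_le ha ha' hb hb'
    _ = 2 * √2 * ‖1 - b * a‖ := by ring

end UpperHalfDisk

theorem stmt_5_general (a b c : ℂ)
    (ha : ‖a‖ ≤ 1) (ha' : 0 ≤ a.im)
    (hb : ‖b‖ ≤ 1) (hb' : 0 ≤ b.im)
    (hab : a ≠ b)
    (hden : 1 - b * a ≠ 0) :
    ‖(1 - b * c) / (1 - b * a)‖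
      ≤ 5 * (1 + ‖(c - b) / (a - b)‖) := by
  set k := (c - b) / (a - b)
  have hw : ‖(1 - b ^ 2) / (1 - b * a)‖ ≤ 2 * √2 := by
    rw [norm_div, div_le_iff₀ (norm_pos_iff.mpr hden)]
    exact norm_one_sub_sq_le ha ha' hb hb'
  have hk : ‖1 - k‖ ≤ 1 + ‖k‖ := (norm_sub_le _ _).trans (by rw [norm_one])
  have hsqrt2 : √2 ≤ 2 := by
    rw [Real.sqrt_le_left zero_le_two]; norm_num
  rw [div_one_sub_mul_eq c hab hden]
  calc ‖k + (1 - k) * ((1 - b ^ 2) / (1 - b * a))‖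
      ≤ ‖k‖ + ‖1 - k‖ * ‖(1 - b ^ 2) / (1 - b * a)‖ := by
        rw [← norm_mul]; exact norm_add_le _ _
    _ ≤ ‖k‖ + (1 + ‖k‖) * (2 * √2) := by gcongr
    _ ≤ 5 * (1 + ‖k‖) := by nlinarith [norm_nonneg k]

theorem stmt_5 (a b c : ℂ)
    (ha : ‖a‖ ≤ 1) (ha' : 0 ≤ a.im)
    (hb : ‖b‖ ≤ 1) (hb' : 0 ≤ b.im)
    (hc : ‖c‖ ≤ 1) (hc' : 0 ≤ c.im)
    (hab : a ≠ b) (hbc : b ≠ c) (hac : a ≠ c)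
    (hden : 1 - b * a ≠ 0) :
    ‖(1 - b * c) / (1 - b * a)‖
      ≤ 5 * (1 + ‖(c - b) / (a - b)‖) :=
  stmt_5_general a b c ha ha' hb hb' hab hden
end

section
/- Let $a, b, c$ be pairwise distinct complex numbers in the closed upper half unit disk with $1 - ba \ne 0$ and $1 - bc \ne 0$, and set $k = \frac{c-b}{a-b}$. Then $\frac{1}{5(1 + 1/|k|)} \le \left|\frac{1-bc}{1-ba}\right| \le 5(1+|k|)$. -/
/-!
On the closed upper half disk `|a - b| ≤ |1 - ba|`,
since `|1 - ba|² - |a - b|² = (1 - |a|²)(1 - |b|²) + 4 Im a Im b`. It gives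
`|1 - b²| ≤ |1 - ba| + |b| |a - b| ≤ 2 |1 - ba|`, and then the identity
`1 - bc = k (1 - ba) + (1 - k)(1 - b²)` with `k = (c - b)/(a - b)` bounds `|1 - bc| / |1 - ba|`
by `|k| + 2 (1 + |k|)`. Exchanging `a` and `c` replaces `k` by `1/k` and gives the lower bound.
-/

open Complex

namespace Complex

theorem normSq_one_sub_mul_sub_normSq_sub (a b : ℂ) :
    normSq (1 - b * a) - normSq (a - b) = (1 - normSq a) * (1 - normSq b) + 4 * a.im * b.im := by
  simp only [normSq_apply, sub_re, sub_im, one_re, one_im, mul_re, mul_im]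
  ring

variable {a b c : ℂ}

theorem norm_sub_le_norm_one_sub_mul (ha : ‖a‖ ≤ 1) (ha' : 0 ≤ a.im)
    (hb : ‖b‖ ≤ 1) (hb' : 0 ≤ b.im) : ‖a - b‖ ≤ ‖1 - b * a‖ := by
  have hna : normSq a ≤ 1 := by rw [normSq_eq_norm_sq]; exact pow_le_one₀ (norm_nonneg a) ha
  have hnb : normSq b ≤ 1 := by rw [normSq_eq_norm_sq]; exact pow_le_one₀ (norm_nonneg b) hb
  rw [← sq_le_sq₀ (norm_nonneg _) (norm_nonneg _), ← normSq_eq_norm_sq, ← normSq_eq_norm_sq]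
  nlinarith [normSq_one_sub_mul_sub_normSq_sub a b, mul_nonneg ha' hb',
    mul_nonneg (sub_nonneg.2 hna) (sub_nonneg.2 hnb)]

theorem one_sub_mul_ne_zero_of_ne (ha : ‖a‖ ≤ 1) (ha' : 0 ≤ a.im)
    (hb : ‖b‖ ≤ 1) (hb' : 0 ≤ b.im) (hab : a ≠ b) : 1 - b * a ≠ 0 :=
  norm_pos_iff.1 <|
    (norm_pos_iff.2 (sub_ne_zero.2 hab)).trans_le (norm_sub_le_norm_one_sub_mul ha ha' hb hb')

theorem norm_one_sub_sq_le (ha : ‖a‖ ≤ 1) (ha' : 0 ≤ a.im)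
    (hb : ‖b‖ ≤ 1) (hb' : 0 ≤ b.im) : ‖1 - b ^ 2‖ ≤ 2 * ‖1 - b * a‖ :=
  calc ‖1 - b ^ 2‖ = ‖(1 - b * a) + b * (a - b)‖ := by ring_nf
    _ ≤ ‖1 - b * a‖ + ‖b‖ * ‖a - b‖ := (norm_add_le _ _).trans_eq (by rw [norm_mul])
    _ ≤ ‖1 - b * a‖ + 1 * ‖1 - b * a‖ := by
      gcongr
      exact norm_sub_le_norm_one_sub_mul ha ha' hb hb'
    _ = 2 * ‖1 - b * a‖ := by ring

theorem norm_one_sub_mul_div_le (ha : ‖a‖ ≤ 1) (ha' : 0 ≤ a.im)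
    (hb : ‖b‖ ≤ 1) (hb' : 0 ≤ b.im) (hab : a ≠ b) :
    ‖(1 - b * c) / (1 - b * a)‖ ≤ 5 * (1 + ‖(c - b) / (a - b)‖) := by
  set k := (c - b) / (a - b)
  have hden := one_sub_mul_ne_zero_of_ne ha ha' hb hb' hab
  have hid : 1 - b * c = k * (1 - b * a) + (1 - k) * (1 - b ^ 2) := by
    simp only [k]
    field_simp [sub_ne_zero.2 hab]
    ring
  have h1k : ‖1 - k‖ ≤ 1 + ‖k‖ := by simpa using norm_sub_le 1 k
  have hnum : ‖1 - b * c‖ ≤ ‖k‖ * ‖1 - b * a‖ + (1 + ‖k‖) * (2 * ‖1 - b * a‖) :=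
    calc ‖1 - b * c‖ ≤ ‖k‖ * ‖1 - b * a‖ + ‖1 - k‖ * ‖1 - b ^ 2‖ := by
          rw [hid, ← norm_mul, ← norm_mul]; exact norm_add_le _ _
      _ ≤ ‖k‖ * ‖1 - b * a‖ + (1 + ‖k‖) * (2 * ‖1 - b * a‖) := by
          gcongr
          exact norm_one_sub_sq_le ha ha' hb hb'
  rw [norm_div, div_le_iff₀ (norm_pos_iff.2 hden)]
  nlinarith [norm_nonneg k, norm_nonneg (1 - b * a)]

end Complex

theorem stmt_6_general (a b c : ℂ)
    (ha : ‖a‖ ≤ 1) (ha' : 0 ≤ a.im)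
    (hb : ‖b‖ ≤ 1) (hb' : 0 ≤ b.im)
    (hc : ‖c‖ ≤ 1) (hc' : 0 ≤ c.im)
    (hab : a ≠ b) (hbc : b ≠ c) :
    1 / (5 * (1 + 1 / ‖(c - b) / (a - b)‖))
        ≤ ‖(1 - b * c) / (1 - b * a)‖ ∧
    ‖(1 - b * c) / (1 - b * a)‖
        ≤ 5 * (1 + ‖(c - b) / (a - b)‖) := by
  refine ⟨?_, norm_one_sub_mul_div_le ha ha' hb hb' hab⟩
  have hswap := norm_one_sub_mul_div_le (c := a) hc hc' hb hb' hbc.symm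
  have hpos : 0 < ‖(1 - b * a) / (1 - b * c)‖ :=
    norm_pos_iff.2 <| div_ne_zero (one_sub_mul_ne_zero_of_ne ha ha' hb hb' hab)
      (one_sub_mul_ne_zero_of_ne hc hc' hb hb' hbc.symm)
  have norm_div_eq_one_div {x y : ℂ} : ‖x / y‖ = 1 / ‖y / x‖ := by
    rw [one_div, ← norm_inv, inv_div]
  rw [norm_div_eq_one_div (x := a - b)] at hswap
  rw [norm_div_eq_one_div (x := 1 - b * c)]
  exact one_div_le_one_div_of_le hpos hswap

theorem stmt_6 (a b c : ℂ)
    (ha : ‖a‖ ≤ 1) (ha' : 0 ≤ a.im)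
    (hb : ‖b‖ ≤ 1) (hb' : 0 ≤ b.im)
    (hc : ‖c‖ ≤ 1) (hc' : 0 ≤ c.im)
    (hab : a ≠ b) (hbc : b ≠ c) (hac : a ≠ c)
    (hden : 1 - b * a ≠ 0) (hden' : 1 - b * c ≠ 0) :
    1 / (5 * (1 + 1 / ‖(c - b) / (a - b)‖))
        ≤ ‖(1 - b * c) / (1 - b * a)‖ ∧
    ‖(1 - b * c) / (1 - b * a)‖
        ≤ 5 * (1 + ‖(c - b) / (a - b)‖) :=
  stmt_6_general a b c ha ha' hb hb' hc hc' hab hbc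
end

section
/- Let $K \subset \mathbb{C}$ be a nonempty compact set and let $\widehat{K}$ denote its filling-in (the union of $K$ with all bounded connected components of $\mathbb{C} \setminus K$). Then for every $\epsilon > 0$ there exists $\epsilon_0$ with $0 < \epsilon_0 < \epsilon/2$ such that every bounded connected component of $\mathbb{C} \setminus \overline{\mathbb{U}}(\widehat{K}, \epsilon/2)$ is contained in the unbounded connected component of $\mathbb{C} \setminus \overline{\mathbb{U}}(\widehat{K}, \epsilon_0)$. -/
open Metric Bornology

/-- The filling-in of a set `K ⊆ ℂ`: the union of `K` with all bounded connected
components of its complement. -/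
def fill (K : Set ℂ) : Set ℂ :=
  K ∪ {z | z ∉ K ∧ IsBounded (connectedComponentIn Kᶜ z)}

lemma aux_rank : (1 : Cardinal) < Module.rank ℝ ℂ := by
  rw [Complex.rank_real_complex]; norm_num

lemma aux_unbounded_of_compl_closedBall_subset {r : ℝ} {s : Set ℂ}
    (h : (closedBall (0:ℂ) r)ᶜ ⊆ s) : ¬ IsBounded s := by
  intro hb
  obtain ⟨m, hm⟩ := hb.subset_closedBall 0
  set v : ℝ := max r m + 1 with hv
  have hvnorm : ‖(↑v : ℂ)‖ = |v| := by rw [Complex.norm_real, Real.norm_eq_abs]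
  have h1 : (↑v : ℂ) ∈ (closedBall (0:ℂ) r)ᶜ := by
    simp only [Set.mem_compl_iff, mem_closedBall, dist_zero_right, hvnorm, not_le]
    have hr' : r < v := by have := le_max_left r m; linarith
    exact lt_of_lt_of_le hr' (le_abs_self v)
  have h2 := hm (h h1)
  simp only [mem_closedBall, dist_zero_right, hvnorm] at h2
  have h3 : m < v := by have := le_max_right r m; linarith
  exact absurd h2 (not_le.mpr (lt_of_lt_of_le h3 (le_abs_self v)))

lemma aux_isPathConnected_compl_closedBall {r : ℝ} (hr : 0 ≤ r) :
    IsPathConnected (closedBall (0:ℂ) r)ᶜ := by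
  have hsphere : IsPathConnected (sphere (0:ℂ) (r+1)) :=
    isPathConnected_sphere aux_rank 0 (by linarith)
  have hsub : sphere (0:ℂ) (r+1) ⊆ (closedBall (0:ℂ) r)ᶜ := by
    intro p hp
    simp only [mem_sphere_iff_norm, sub_zero] at hp
    simp only [Set.mem_compl_iff, mem_closedBall, dist_zero_right, not_le, hp]
    linarith
  have hx₀mem : (↑(r+1) : ℂ) ∈ sphere (0:ℂ) (r+1) := by
    rw [mem_sphere_iff_norm, sub_zero, Complex.norm_real, Real.norm_eq_abs,
      abs_of_nonneg (by linarith : (0:ℝ) ≤ r+1)]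
  refine ⟨(↑(r+1) : ℂ), hsub hx₀mem, ?_⟩
  intro y hy
  simp only [Set.mem_compl_iff, mem_closedBall, dist_zero_right, not_le] at hy
  have hy0 : 0 < ‖y‖ := lt_of_le_of_lt hr hy
  set c : ℝ := (r+1)/‖y‖ with hc
  have hc0 : 0 < c := by positivity
  have hy' : ‖c • y‖ = r + 1 := by
    rw [norm_smul, Real.norm_eq_abs, abs_of_pos hc0, hc, div_mul_cancel₀ _ hy0.ne']
  -- segment from y to c • y stays outside the closed ball
  have hseg : segment ℝ y (c • y) ⊆ (closedBall (0:ℂ) r)ᶜ := by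
    rintro p ⟨a, b, ha, hb, hab, rfl⟩
    simp only [Set.mem_compl_iff, mem_closedBall, dist_zero_right, not_le]
    rw [smul_smul, ← add_smul, norm_smul, Real.norm_eq_abs]
    rcases le_total 1 c with h1c | h1c
    · have h1 : 1 ≤ a + b * c := by nlinarith
      have : (1:ℝ) * ‖y‖ ≤ |a + b*c| * ‖y‖ := by
        have : (1:ℝ) ≤ |a + b*c| := le_trans h1 (le_abs_self _)
        nlinarith
      nlinarith
    · have h1 : c ≤ a + b * c := by nlinarith
      have h2 : c ≤ |a + b*c| := le_trans h1 (le_abs_self _)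
      have h3 : c * ‖y‖ ≤ |a + b*c| * ‖y‖ := by nlinarith
      have h4 : c * ‖y‖ = r + 1 := by rw [hc, div_mul_cancel₀ _ hy0.ne']
      nlinarith
  have J1 : JoinedIn (closedBall (0:ℂ) r)ᶜ y (c • y) := by
    have hconv : IsPathConnected (segment ℝ y (c • y)) :=
      (convex_segment y (c • y)).isPathConnected ⟨y, left_mem_segment ℝ y (c • y)⟩
    exact (hconv.joinedIn y (left_mem_segment ℝ y (c • y)) (c • y)
      (right_mem_segment ℝ y (c • y))).mono hseg
  have J2 : JoinedIn (closedBall (0:ℂ) r)ᶜ (c • y) (↑(r+1) : ℂ) := by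
    have hmem : c • y ∈ sphere (0:ℂ) (r+1) := by
      rw [mem_sphere_iff_norm, sub_zero]; exact hy'
    exact (hsphere.joinedIn (c • y) hmem _ hx₀mem).mono hsub
  exact (J1.trans J2).symm

theorem stmt_17 (K : Set ℂ) (hK : K.Nonempty) (hKc : IsCompact K)
    (ε : ℝ) (hε : 0 < ε) :
    ∃ ε₀ : ℝ, 0 < ε₀ ∧ ε₀ < ε / 2 ∧
      ∀ z : ℂ, z ∉ cthickening (ε / 2) (fill K) →
        IsBounded (connectedComponentIn (cthickening (ε / 2) (fill K))ᶜ z) →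
        ¬ IsBounded (connectedComponentIn (cthickening ε₀ (fill K))ᶜ z) := by
  classical
  set S := fill K with hSdef
  have hKS : K ⊆ S := Set.subset_union_left
  have hε2 : 0 < ε / 2 := by linarith
  -- Step 1: S is bounded
  obtain ⟨R₀, hR₀⟩ := hKc.isBounded.subset_closedBall 0
  set R : ℝ := max R₀ 0 with hRdef
  have hR0 : 0 ≤ R := le_max_right _ _
  have hKR : K ⊆ closedBall (0:ℂ) R := hR₀.trans (closedBall_subset_closedBall (le_max_left _ _))
  have hSsub : S ⊆ closedBall (0:ℂ) R := by
    intro z hz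
    by_contra hzb
    have hzK : z ∈ Kᶜ := fun h => hzb (hKR h)
    have hcc : (closedBall (0:ℂ) R)ᶜ ⊆ connectedComponentIn Kᶜ z :=
      (aux_isPathConnected_compl_closedBall hR0).isConnected.isPreconnected.subset_connectedComponentIn
        hzb (Set.compl_subset_compl.mpr hKR)
    have hub : ¬ IsBounded (connectedComponentIn Kᶜ z) :=
      aux_unbounded_of_compl_closedBall_subset hcc
    rcases hz with h | ⟨_, h⟩
    · exact hzK h
    · exact hub h
  have hSb : IsBounded S := (isBounded_closedBall).subset hSsub
  -- Step 2: the cthickening is bounded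
  obtain ⟨R₁', hR₁'⟩ := (hSb.cthickening (δ := ε/2)).subset_closedBall 0
  set R₁ : ℝ := max (max R₁' R) 0 with hR₁def
  have hR₁0 : 0 ≤ R₁ := le_max_right _ _
  have hcth : cthickening (ε/2) S ⊆ closedBall (0:ℂ) R₁ :=
    hR₁'.trans (closedBall_subset_closedBall ((le_max_left _ _).trans (le_max_left _ _)))
  have hKR₁ : K ⊆ closedBall (0:ℂ) R₁ :=
    fun z hz => hcth (self_subset_cthickening _ (hKS hz))
  -- base point far away
  set z₀ : ℂ := (↑(R₁+1) : ℂ) with hz₀def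
  have hz₀norm : ‖z₀‖ = R₁ + 1 := by
    rw [hz₀def, Complex.norm_real, Real.norm_eq_abs,
      abs_of_nonneg (by linarith : (0:ℝ) ≤ R₁+1)]
  have hz₀ball : z₀ ∈ (closedBall (0:ℂ) R₁)ᶜ := by
    simp only [Set.mem_compl_iff, mem_closedBall, dist_zero_right, hz₀norm, not_le]
    linarith
  have hcplK : (closedBall (0:ℂ) R₁)ᶜ ⊆ Kᶜ := Set.compl_subset_compl.mpr hKR₁
  have hz₀K : z₀ ∈ Kᶜ := hcplK hz₀ball
  set U : Set ℂ := connectedComponentIn Kᶜ z₀ with hUdef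
  have hUopen : IsOpen U := hKc.isClosed.isOpen_compl.connectedComponentIn
  have hballU : (closedBall (0:ℂ) R₁)ᶜ ⊆ U :=
    (aux_isPathConnected_compl_closedBall hR₁0).isConnected.isPreconnected.subset_connectedComponentIn
      hz₀ball hcplK
  have hUunb : ¬ IsBounded U := aux_unbounded_of_compl_closedBall_subset hballU
  -- Step 3: Sᶜ = U
  have hUS : Sᶜ = U := by
    ext z
    constructor
    · intro hz
      have hzK : z ∉ K := fun h => hz (Or.inl h)
      have hzunb : ¬ IsBounded (connectedComponentIn Kᶜ z) := fun h => hz (Or.inr ⟨hzK, h⟩)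
      have : ¬ connectedComponentIn Kᶜ z ⊆ closedBall (0:ℂ) R₁ := by
        intro h; exact hzunb ((isBounded_closedBall).subset h)
      obtain ⟨w, hw, hwb⟩ := Set.not_subset.mp this
      have h1 : connectedComponentIn Kᶜ z = connectedComponentIn Kᶜ w := connectedComponentIn_eq hw
      have h2 : U = connectedComponentIn Kᶜ w := connectedComponentIn_eq (hballU hwb)
      have h3 : connectedComponentIn Kᶜ z = U := h1.trans h2.symm
      show z ∈ U
      rw [← h3]
      exact mem_connectedComponentIn (show z ∈ Kᶜ from hzK)
    · intro hu
      have huK : z ∈ Kᶜ := connectedComponentIn_subset _ _ hu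
      have heq : connectedComponentIn Kᶜ z = U := (connectedComponentIn_eq hu).symm
      rintro (h | ⟨_, h⟩)
      · exact huK h
      · rw [heq] at h; exact hUunb h
  have hSclosed : IsClosed S := by
    rw [← isOpen_compl_iff, hUS]; exact hUopen
  have hUpath : IsPathConnected U := by
    apply hUopen.isConnected_iff_isPathConnected.mp
    rw [hUdef]
    exact isConnected_connectedComponentIn_iff.mpr hz₀K
  have hz₀U : z₀ ∈ U := mem_connectedComponentIn hz₀K
  -- Step 4: the compact set C
  set C : Set ℂ := closedBall (0:ℂ) (R₁+1) ∩ (thickening (ε/2) S)ᶜ with hCdef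
  have hCcompact : IsCompact C :=
    (isCompact_closedBall _ _).inter_right isOpen_thickening.isClosed_compl
  have hCU : ∀ z ∈ C, z ∈ U := by
    intro z hz
    have : z ∉ S := fun h => hz.2 (self_subset_thickening hε2 _ h)
    exact hUS ▸ this
  -- Step 5: local unboundedness claim
  have claim : ∀ z : ℂ, ∃ δ : ℝ, 0 < δ ∧ δ < ε/2 ∧
      (z ∈ C → ¬ IsBounded (connectedComponentIn (cthickening δ S)ᶜ z)) := by
    intro z
    by_cases hz : z ∈ C
    · obtain ⟨γ, hγ⟩ := hUpath.joinedIn z₀ hz₀U z (hCU z hz)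
      set P : Set ℂ := Set.range γ with hPdef
      have hPcomp : IsCompact P := isCompact_range γ.continuous
      have hPU : P ⊆ U := by rintro p ⟨t, rfl⟩; exact hγ t
      have hPdisj : Disjoint P S := Set.disjoint_left.mpr
        (fun p hp hpS => (hUS ▸ (hPU hp) : p ∈ Sᶜ) hpS)
      obtain ⟨δ₁, hδ₁, hdisj⟩ := hPdisj.exists_cthickenings hPcomp hSclosed
      refine ⟨min δ₁ (ε/4), by positivity,
        lt_of_le_of_lt (min_le_right _ _) (by linarith), fun _ => ?_⟩
      have hPsub : P ⊆ (cthickening (min δ₁ (ε/4)) S)ᶜ := by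
        intro p hp hp'
        exact Set.disjoint_left.mp hdisj (self_subset_cthickening _ hp)
          (cthickening_mono (min_le_left _ _) S hp')
      have hb1 : (closedBall (0:ℂ) R₁)ᶜ ⊆ (cthickening (min δ₁ (ε/4)) S)ᶜ :=
        Set.compl_subset_compl.mpr
          ((cthickening_mono (le_trans (min_le_right _ _) (by linarith : ε/4 ≤ ε/2)) S).trans hcth)
      have hzP : z ∈ P := ⟨1, γ.target⟩
      have hz₀P : z₀ ∈ P := ⟨0, γ.source⟩
      have h1 : P ⊆ connectedComponentIn (cthickening (min δ₁ (ε/4)) S)ᶜ z :=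
        (isPreconnected_range γ.continuous).subset_connectedComponentIn hzP hPsub
      have h2 : (closedBall (0:ℂ) R₁)ᶜ ⊆
          connectedComponentIn (cthickening (min δ₁ (ε/4)) S)ᶜ z₀ :=
        (aux_isPathConnected_compl_closedBall hR₁0).isConnected.isPreconnected.subset_connectedComponentIn
          hz₀ball hb1
      rw [connectedComponentIn_eq (h1 hz₀P)]
      exact aux_unbounded_of_compl_closedBall_subset h2
    · exact ⟨ε/4, by positivity, by linarith, fun h => absurd h hz⟩
  choose δ hδpos hδlt hδC using claim
  -- Step 6: compactness / finite subcover
  obtain ⟨t, htC, hcover⟩ := hCcompact.elim_nhds_subcover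
    (fun x => connectedComponentIn (cthickening (δ x) S)ᶜ x) (by
      intro x hx
      have hxS : x ∉ cthickening (δ x) S := fun h =>
        hx.2 (cthickening_subset_thickening' hε2 (hδlt x) S h)
      exact (isClosed_cthickening.isOpen_compl.connectedComponentIn).mem_nhds
        (mem_connectedComponentIn hxS))
  set E : Set ℝ := insert (ε/4) (δ '' ↑t) with hEdef
  have hEfin : E.Finite := (t.finite_toSet.image δ).insert _
  have hEne : E.Nonempty := ⟨ε/4, Set.mem_insert _ _⟩
  set ε₀ : ℝ := sInf E with hε₀def
  have hε₀mem : ε₀ ∈ E := hEne.csInf_mem hEfin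
  have hε₀pos : 0 < ε₀ := by
    rcases hε₀mem with h | ⟨x, _, h⟩
    · rw [h]; positivity
    · rw [← h]; exact hδpos x
  have hε₀lt : ε₀ < ε/2 := by
    rcases hε₀mem with h | ⟨x, _, h⟩
    · rw [h]; linarith
    · rw [← h]; exact hδlt x
  refine ⟨ε₀, hε₀pos, hε₀lt, ?_⟩
  intro z hz hb
  -- z lies in the ball of radius R₁ + 1
  have hzball : z ∈ closedBall (0:ℂ) (R₁+1) := by
    by_contra hzb
    have hzb' : z ∈ (closedBall (0:ℂ) R₁)ᶜ := fun h =>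
      hzb (closedBall_subset_closedBall (by linarith) h)
    have hsub : (closedBall (0:ℂ) R₁)ᶜ ⊆ (cthickening (ε/2) S)ᶜ :=
      Set.compl_subset_compl.mpr hcth
    have hcc : (closedBall (0:ℂ) R₁)ᶜ ⊆ connectedComponentIn (cthickening (ε/2) S)ᶜ z :=
      (aux_isPathConnected_compl_closedBall hR₁0).isConnected.isPreconnected.subset_connectedComponentIn
        hzb' hsub
    exact aux_unbounded_of_compl_closedBall_subset hcc hb
  have hzC : z ∈ C := ⟨hzball, fun h => hz (thickening_subset_cthickening _ _ h)⟩
  obtain ⟨x, hxt, hzx⟩ : ∃ x ∈ t, z ∈ connectedComponentIn (cthickening (δ x) S)ᶜ x := by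
    have := hcover hzC
    simpa using this
  have hxC : x ∈ C := htC x hxt
  have hxunb : ¬ IsBounded (connectedComponentIn (cthickening (δ x) S)ᶜ x) := hδC x hxC
  rw [connectedComponentIn_eq hzx] at hxunb
  have hle : ε₀ ≤ δ x := csInf_le hEfin.bddBelow (Set.mem_insert_iff.mpr
    (Or.inr ⟨x, hxt, rfl⟩))
  have hmono : connectedComponentIn (cthickening (δ x) S)ᶜ z ⊆
      connectedComponentIn (cthickening ε₀ S)ᶜ z :=
    connectedComponentIn_mono z (Set.compl_subset_compl.mpr (cthickening_mono hle S))
  intro hbf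
  exact hxunb (hbf.subset hmono)
end

section
/- Let $K \subset \mathbb{C}$ be a compact set equal to its own filling-in (i.e., $\mathbb{C} \setminus K$ is connected), and let $\{A_m\}$ be a sequence of compact connected sets such that $\sup_{x \in \partial A_m} \operatorname{dist}(x, K) \to 0$, where $A_m$ is the closure of a bounded open set and $\partial A_m$ its boundary. Then $\sup_{x \in A_m} \operatorname{dist}(x, K) \to 0$ as $m \to \infty$. -/
/-!
Choose a disc containing the 1-neighbourhood of `K` and a point `p` outside the disc. The compact
set of points of the disc at distance `≥ ε` from `K`, together with `p`, lies in `Kᶜ`; as `Kᶜ` is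
a connected open set, it lies in a compact connected `L ⊆ Kᶜ`, and `L` keeps a distance `δ > 0`
from `K`. Once `∂A_m` is within `min δ 1` of `K`, `A_m` lies in the disc: an outward ray from a
point of `A_m` outside the disc would have to cross `∂A_m`. A point of `A_m` at distance `≥ ε`
from `K` is then in `L`, and so is `p ∉ A_m`; the connected set `L` therefore meets `∂A_m`,
which is impossible at distance `≥ δ` from `K`.
-/

open Metric Bornology Set Filter Topology

theorem IsPreconnected.inter_frontier_nonempty {X : Type*} [TopologicalSpace X] {s t : Set X}
    (hs : IsPreconnected s) (hst : (s ∩ t).Nonempty) (hst' : (s \ t).Nonempty) :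
    (s ∩ frontier t).Nonempty := by
  by_contra h
  have hint : ∀ x ∈ s, x ∈ closure t → x ∈ interior t := fun x hxs hxt =>
    by_contra fun hxi => h ⟨x, hxs, hxt, hxi⟩
  obtain ⟨x, hxs, hxt⟩ := hst
  obtain ⟨y, hys, hyt⟩ := hst'
  have hs_int : s ⊆ interior t :=
    hs.subset_of_closure_inter_subset isOpen_interior ⟨x, hxs, hint x hxs (subset_closure hxt)⟩
      fun z ⟨hz, hzs⟩ => hint z hzs (closure_mono interior_subset hz)
  exact hyt (interior_subset (hs_int hys))

theorem Bornology.IsBounded.subset_closedBall_of_frontier_subset {E : Type*}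
    [NormedAddCommGroup E] [NormedSpace ℝ E] {A : Set E} (hA : IsBounded A) {R : ℝ}
    (hR : 0 ≤ R) (hfr : frontier A ⊆ closedBall 0 R) : A ⊆ closedBall 0 R := by
  intro x hxA
  by_contra hxR
  rw [mem_closedBall_zero_iff, not_le] at hxR
  have hx : 0 < ‖x‖ := hR.trans_lt hxR
  set ray : Set E := (fun t : ℝ => t • x) '' Ici 1
  have hray : ∀ y ∈ ray, ‖x‖ ≤ ‖y‖ := by
    rintro _ ⟨t, ht, rfl⟩
    rw [norm_smul, Real.norm_of_nonneg (zero_le_one.trans ht)]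
    exact le_mul_of_one_le_left (norm_nonneg x) ht
  obtain ⟨T, hAT⟩ := hA.subset_closedBall 0
  have hfar : (1 + |T| / ‖x‖) • x ∉ A := fun h => by
    have hT := mem_closedBall_zero_iff.1 (hAT h)
    rw [norm_smul, Real.norm_of_nonneg (by positivity), add_mul, one_mul,
      div_mul_cancel₀ _ hx.ne'] at hT
    linarith [le_abs_self T]
  obtain ⟨y, hy, hyfr⟩ := ((isPreconnected_Ici).image _
    (continuous_id.smul continuous_const).continuousOn).inter_frontier_nonempty
    ⟨x, ⟨1, self_mem_Ici, one_smul ℝ x⟩, hxA⟩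
    ⟨_, ⟨_, le_add_of_nonneg_right (by positivity), rfl⟩, hfar⟩
  exact (hxR.trans_le (hray y hy)).not_ge (mem_closedBall_zero_iff.1 (hfr hyfr))

theorem IsOpen.exists_isCompact_isPreconnected_superset {E : Type*} [NormedAddCommGroup E]
    [NormedSpace ℝ E] [ProperSpace E] {U S : Set E} (hU : IsOpen U) (hUc : IsConnected U)
    (hS : IsCompact S) (hSU : S ⊆ U) :
    ∃ L, IsCompact L ∧ IsPreconnected L ∧ S ⊆ L ∧ L ⊆ U := by
  obtain ⟨p, hp⟩ := hUc.nonempty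
  have hpath := (hU.isConnected_iff_isPathConnected).1 hUc
  have hnhd :
      ∀ z ∈ S, ∃ N ∈ 𝓝 z, IsCompact N ∧ IsPreconnected N ∧ p ∈ N ∧ N ⊆ U := by
    intro z hz
    obtain ⟨r, hr, hrU⟩ := nhds_basis_closedBall.mem_iff.1 (hU.mem_nhds (hSU hz))
    have hzp := hpath.joinedIn z (hSU hz) p hp
    refine ⟨closedBall z r ∪ range hzp.somePath,
      mem_of_superset (closedBall_mem_nhds z hr) subset_union_left,
      (isCompact_closedBall z r).union (isCompact_range hzp.somePath.continuous),
      (convex_closedBall z r).isPreconnected.union z (mem_closedBall_self hr.le)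
        ⟨0, hzp.somePath.source⟩ (isConnected_range hzp.somePath.continuous).isPreconnected,
      Or.inr ⟨1, hzp.somePath.target⟩,
      union_subset hrU (range_subset_iff.2 hzp.somePath_mem)⟩
  choose! N hN hNc hNconn hpN hNU using hnhd
  obtain ⟨t, htS, hSt⟩ := hS.elim_nhds_subcover N hN
  refine ⟨⋃ z ∈ t, N z, t.isCompact_biUnion fun z hz => hNc z (htS z hz), ?_, hSt,
    iUnion₂_subset fun z hz => hNU z (htS z hz)⟩
  rw [← Finset.set_biUnion_coe, ← sUnion_image]
  exact isPreconnected_sUnion p _ (forall_mem_image.2 fun z hz => hpN z (htS z hz))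
    (forall_mem_image.2 fun z hz => hNconn z (htS z hz))

theorem tendsto_biSup_infDist_nhds_zero_iff {X ι : Type*} [PseudoMetricSpace X] {l : Filter ι}
    {s : ι → Set X} {K : Set X} (hK : K.Nonempty) (hs : ∀ i, IsCompact (s i)) :
    Tendsto (fun i => ⨆ x ∈ s i, infDist x K) l (𝓝 0) ↔
      ∀ δ > 0, ∀ᶠ i in l, s i ⊆ thickening δ K := by
  have hnonneg : ∀ i, 0 ≤ ⨆ x ∈ s i, infDist x K := fun i =>
    Real.iSup_nonneg fun x => Real.iSup_nonneg fun _ => infDist_nonneg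
  have hle : ∀ i, ∀ x ∈ s i, infDist x K ≤ ⨆ y ∈ s i, infDist y K := fun i x hx =>
    le_ciSup₂ (f := fun y (_ : y ∈ s i) => infDist y K)
      (((hs i).bddAbove_image (continuous_infDist_pt K).continuousOn).mono <|
        iUnion_subset fun y => range_subset_iff.2 fun hy => mem_image_of_mem (infDist · K) hy)
      x hx
  rw [tendsto_order, and_iff_right fun a ha => .of_forall fun i => ha.trans_le (hnonneg i)]
  refine ⟨fun h δ hδ => ?_, fun h δ hδ => ?_⟩
  · filter_upwards [h δ hδ] with i hi x hx
    exact (mem_thickening_iff_infDist_lt hK).2 ((hle i x hx).trans_lt hi)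
  · filter_upwards [h (δ / 2) (half_pos hδ)] with i hi
    have hsup : ⨆ x ∈ s i, infDist x K ≤ δ / 2 :=
      Real.iSup_le (fun x => Real.iSup_le (fun hx =>
        ((mem_thickening_iff_infDist_lt hK).1 (hi hx)).le) (half_pos hδ).le) (half_pos hδ).le
    exact hsup.trans_lt (half_lt_self hδ)

theorem stmt_18_general (K : Set ℂ) (hKc : IsCompact K) (hKne : K.Nonempty)
    (hfill : IsConnected Kᶜ)
    (A : ℕ → Set ℂ)
    (hA : ∀ m, IsCompact (A m) ∧ IsConnected (A m))
    (hbd : Filter.Tendsto (fun m => ⨆ x ∈ frontier (A m), infDist x K)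
      Filter.atTop (nhds 0)) :
    Filter.Tendsto (fun m => ⨆ x ∈ A m, infDist x K) Filter.atTop (nhds 0) := by
  have hfr := (tendsto_biSup_infDist_nhds_zero_iff hKne fun m =>
    (hA m).1.of_isClosed_subset isClosed_frontier (hA m).1.isClosed.frontier_subset).1 hbd
  refine (tendsto_biSup_infDist_nhds_zero_iff hKne fun m => (hA m).1).2 fun ε hε => ?_
  obtain ⟨R, hR, hKR⟩ := (hKc.isBounded.thickening (δ := 1)).subset_closedBall_lt 0 0
  obtain ⟨p, hpR⟩ := NormedField.exists_lt_norm ℂ R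
  have hpR' : p ∉ closedBall 0 R := fun hp => hpR.not_ge (mem_closedBall_zero_iff.1 hp)
  have hSK : insert p (closedBall 0 R \ thickening ε K) ⊆ Kᶜ :=
    insert_subset (fun hpK => hpR' (hKR (self_subset_thickening one_pos K hpK)))
      fun z hz hzK => hz.2 (self_subset_thickening hε K hzK)
  obtain ⟨L, hLc, hLconn, hSL, hLK⟩ :=
    hKc.isClosed.isOpen_compl.exists_isCompact_isPreconnected_superset hfill
      (((isCompact_closedBall 0 R).diff isOpen_thickening).insert p) hSK
  obtain ⟨δ, hδ, hδL⟩ := hKc.exists_thickening_subset_open hLc.isClosed.isOpen_compl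
    fun z hzK hzL => hLK hzL hzK
  filter_upwards [hfr (min δ 1) (lt_min hδ one_pos)] with m hm
  have hAR : A m ⊆ closedBall 0 R :=
    (hA m).1.isBounded.subset_closedBall_of_frontier_subset hR.le
      (hm.trans ((thickening_mono (min_le_right _ _) K).trans hKR))
  intro x hx
  by_contra hxε
  obtain ⟨w, hwL, hwA⟩ := hLconn.inter_frontier_nonempty
    ⟨x, hSL (mem_insert_of_mem _ ⟨hAR hx, hxε⟩), hx⟩
    ⟨p, hSL (mem_insert _ _), fun hpA => hpR' (hAR hpA)⟩
  exact hδL (thickening_mono (min_le_left _ _) K (hm hwA)) hwL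

theorem stmt_18 (K : Set ℂ) (hKc : IsCompact K) (hKne : K.Nonempty)
    (hfill : IsConnected Kᶜ)
    (A : ℕ → Set ℂ)
    (hA : ∀ m, IsCompact (A m) ∧ IsConnected (A m))
    (hAcl : ∀ m, ∃ U : Set ℂ, IsOpen U ∧ IsBounded U ∧ A m = closure U)
    (hbd : Filter.Tendsto (fun m => ⨆ x ∈ frontier (A m), infDist x K)
      Filter.atTop (nhds 0)) :
    Filter.Tendsto (fun m => ⨆ x ∈ A m, infDist x K) Filter.atTop (nhds 0) :=
  stmt_18_general K hKc hKne hfill A hA hbd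
end
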